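/- arXiv:1305.3288 — 7 statements merged into one kernel-verified Lean document; each statement's English description precedes it below -/
import Mathlib

section
/- Fix α > 1, 0 ≤ k < n - 1, and a boolean function D on {0,1}^n with 0 < |D| < 2^k. Then there exists a unique pair (p,q) of nonnegative reals satisfying p^α|D| + q^α|D^c| = 2^{-(α-1)k} and p|D| + q|D^c| = 1 with p ≥ q, and the maximum of E[D(Y)] over all distributions Y on {0,1}^n with H_α(Y) ≥ k equals p·|D|. -/
open Finset

/-!
The extremal distribution is flat on `D` and on its complement, with levels `p > q`. For a feasible
`Y`, summing the tangent-line bounds `y ^ α ≥ w ^ α + α w ^ (α - 1) (y - w)` at this two-level point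
`w` gives `∑ Y ^ α ≥ 2^{-(α-1)k} + α (p ^ (α - 1) - q ^ (α - 1)) (Y(D) - p |D|)`, so the Rényi
constraint forces `Y(D) ≤ p |D|`. The pair `(p, q)` exists by the intermediate value theorem along
the line `p |D| + q |Dᶜ| = 1`, where the collision sum moves from `|D| ^ (1 - α)` (at `q = 0`) to
`2 ^ (n (1 - α))` (at `p = q`); it is unique because every such pair attains the same maximum.
-/

namespace Real

theorem inv_rpow_mul_self {x : ℝ} (hx : 0 < x) (α : ℝ) : x⁻¹ ^ α * x = x ^ (1 - α) := by
  rw [inv_rpow hx.le, rpow_sub hx, rpow_one]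
  field_simp

theorem tangent_le_rpow {α x y : ℝ} (hα : 1 ≤ α) (hx : 0 ≤ x) (hy : 0 < y) :
    y ^ α + α * y ^ (α - 1) * (x - y) ≤ x ^ α := by
  have bernoulli := one_add_mul_self_le_rpow_one_add (s := x / y - 1)
    (by linarith [div_nonneg hx hy.le]) hα
  rw [add_sub_cancel, div_rpow hx hy.le] at bernoulli
  have hyα : 0 < y ^ α := rpow_pos_of_pos hy α
  calc y ^ α + α * y ^ (α - 1) * (x - y) = y ^ α * (1 + α * (x / y - 1)) := by
        rw [rpow_sub_one hy.ne']
        field_simp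
    _ ≤ y ^ α * (x ^ α / y ^ α) := by gcongr
    _ = x ^ α := by field_simp

end Real

theorem card_mul_rpow_add_le_sum_rpow {ι : Type*} (T : Finset ι) {Y : ι → ℝ}
    (hY : ∀ x ∈ T, 0 ≤ Y x) {α a : ℝ} (hα : 1 ≤ α) (ha : 0 < a) :
    #T * a ^ α + α * a ^ (α - 1) * (∑ x ∈ T, Y x - #T * a) ≤ ∑ x ∈ T, Y x ^ α :=
  calc _ = ∑ x ∈ T, (a ^ α + α * a ^ (α - 1) * (Y x - a)) := by
        simp only [sum_add_distrib, ← mul_sum, sum_sub_distrib, sum_const, nsmul_eq_mul]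
    _ ≤ _ := sum_le_sum fun x hx => Real.tangent_le_rpow hα (hY x hx) ha

/-- `p` and `q` are the levels of the extremal distribution on the `d` points of `D` and on the
other `N - d` points, and `c` is the bound `2 ^ (-(α - 1) k)` on its collision sum. -/
def IsExtremalPair (α d N c p q : ℝ) : Prop :=
  0 ≤ q ∧ q ≤ p ∧ p ^ α * d + q ^ α * (N - d) = c ∧ p * d + q * (N - d) = 1

theorem exists_isExtremalPair {α d N c : ℝ} (hα : 0 < α) (hd : 0 < d) (hN : 0 < N)
    (hcN : N ^ (1 - α) ≤ c) (hcd : c ≤ d ^ (1 - α)) : ∃ p q, IsExtremalPair α d N c p q := by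
  set P : ℝ → ℝ := fun q => (1 - q * (N - d)) / d
  have hcont : Continuous fun q => P q ^ α * d + q ^ α * (N - d) := by
    fun_prop (disch := positivity)
  have hP0 : P 0 = d⁻¹ := by simp [P]
  have hPN : P N⁻¹ = N⁻¹ := by
    simp only [P]
    field_simp
    ring
  have hc : c ∈ Set.Icc (P N⁻¹ ^ α * d + N⁻¹ ^ α * (N - d)) (P 0 ^ α * d + 0 ^ α * (N - d)) := by
    rw [hPN, hP0, Real.zero_rpow hα.ne', ← mul_add, add_sub_cancel, Real.inv_rpow_mul_self hN,
      zero_mul, add_zero, Real.inv_rpow_mul_self hd]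
    exact ⟨hcN, hcd⟩
  obtain ⟨q, ⟨hq0, hqN⟩, hq⟩ := intermediate_value_Icc' (inv_nonneg.2 hN.le) hcont.continuousOn hc
  refine ⟨P q, q, hq0, ?_, hq, ?_⟩
  · have hqN' : q * N ≤ 1 := by
      simpa [hN.ne'] using mul_le_mul_of_nonneg_right hqN hN.le
    rw [le_div_iff₀ hd]
    linarith
  · simp only [P]
    field_simp
    ring

theorem IsExtremalPair.pos_lt {α d N c p q : ℝ} (h : IsExtremalPair α d N c p q) (hα : α ≠ 0)
    (hd : 0 < d) (hN : 0 < N) (hcN : N ^ (1 - α) < c) (hcd : c < d ^ (1 - α)) :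
    0 < q ∧ q < p := by
  obtain ⟨hq, hqp, hc, hsum⟩ := h
  refine ⟨hq.lt_of_ne ?_, hqp.lt_of_ne ?_⟩
  · rintro rfl
    obtain rfl : p = d⁻¹ := by
      field_simp
      linarith
    rw [Real.zero_rpow hα, zero_mul, add_zero, Real.inv_rpow_mul_self hd] at hc
    exact hcd.ne hc.symm
  · rintro rfl
    obtain rfl : q = N⁻¹ := by
      field_simp
      linarith
    rw [← mul_add, add_sub_cancel, Real.inv_rpow_mul_self hN] at hc
    exact hcN.ne hc

section ExtremalDistribution

variable {ι : Type*} [Fintype ι] [DecidableEq ι] {α c p q : ℝ}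

theorem sum_ite_mem_const (S : Finset ι) (a b : ℝ) :
    ∑ x, (if x ∈ S then a else b) = a * #S + b * (Fintype.card ι - #S) := by
  rw [← sum_add_sum_compl S, sum_congr rfl fun x hx => if_pos hx,
    sum_congr rfl fun x hx => if_neg (mem_compl.1 hx), sum_const, sum_const, card_compl,
    nsmul_eq_mul, nsmul_eq_mul, Nat.cast_sub (card_le_univ S)]
  ring

theorem IsExtremalPair.sum_le {S : Finset ι} (h : IsExtremalPair α #S (Fintype.card ι) c p q)
    (hα : 1 < α) (hq : 0 < q) (hqp : q < p) {Y : ι → ℝ} (hY0 : ∀ x, 0 ≤ Y x)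
    (hY1 : ∑ x, Y x = 1) (hYc : ∑ x, Y x ^ α ≤ c) :
    ∑ x ∈ S, Y x ≤ p * #S := by
  obtain ⟨-, -, hc, hsum⟩ := h
  have hS := card_mul_rpow_add_le_sum_rpow S (fun x _ => hY0 x) hα.le (hq.trans hqp)
  have hSc := card_mul_rpow_add_le_sum_rpow Sᶜ (fun x _ => hY0 x) hα.le hq
  rw [card_compl, Nat.cast_sub (card_le_univ S)] at hSc
  rw [← sum_add_sum_compl S] at hY1 hYc
  have hgap : 0 < α * (p ^ (α - 1) - q ^ (α - 1)) :=
    mul_pos (by linarith) (sub_pos.2 (Real.rpow_lt_rpow hq.le hqp (by linarith)))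
  have hbudget : α * (p ^ (α - 1) - q ^ (α - 1)) * (∑ x ∈ S, Y x - p * #S) ≤ 0 := by
    rw [show ∑ x ∈ Sᶜ, Y x = 1 - ∑ x ∈ S, Y x by linarith,
      show ((Fintype.card ι : ℝ) - #S) * q = 1 - p * #S by linarith] at hSc
    linarith
  exact sub_nonpos.1 (nonpos_of_mul_nonpos_right hbudget hgap)

theorem IsExtremalPair.isGreatest {S : Finset ι} (h : IsExtremalPair α #S (Fintype.card ι) c p q)
    (hα : 1 < α) (hq : 0 < q) (hqp : q < p) :
    IsGreatest {v | ∃ Y : ι → ℝ, (∀ x, 0 ≤ Y x) ∧ ∑ x, Y x = 1 ∧ ∑ x, Y x ^ α ≤ c ∧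
      v = ∑ x ∈ S, Y x} (p * #S) := by
  refine ⟨⟨fun x => if x ∈ S then p else q, fun x => ?_, ?_, ?_, ?_⟩, ?_⟩
  · beta_reduce
    split_ifs <;> linarith
  · rw [sum_ite_mem_const]
    exact h.2.2.2
  · simp_rw [apply_ite (· ^ α)]
    rw [sum_ite_mem_const]
    exact h.2.2.1.le
  · rw [sum_congr rfl fun x hx => if_pos hx, sum_const, nsmul_eq_mul, mul_comm]
  · rintro v ⟨Y, hY0, hY1, hYc, rfl⟩
    exact h.sum_le hα hq hqp hY0 hY1 hYc

end ExtremalDistribution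

theorem stmt5_general (n : ℕ) (k α : ℝ) (hα : 1 < α) (hk : k < (n : ℝ) - 1)
    (D : Fin (2 ^ n) → Bool)
    (hD0 : 0 < (Finset.univ.filter (fun x => D x = true)).card)
    (hDk : ((Finset.univ.filter (fun x => D x = true)).card : ℝ) < (2 : ℝ) ^ k) :
    ∃ p q : ℝ,
      (0 ≤ q ∧ q ≤ p ∧
        p ^ α * ((Finset.univ.filter (fun x => D x = true)).card : ℝ)
          + q ^ α * ((2 : ℝ) ^ n - ((Finset.univ.filter (fun x => D x = true)).card : ℝ))
          = (2 : ℝ) ^ (-(α - 1) * k) ∧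
        p * ((Finset.univ.filter (fun x => D x = true)).card : ℝ)
          + q * ((2 : ℝ) ^ n - ((Finset.univ.filter (fun x => D x = true)).card : ℝ)) = 1) ∧
      (∀ p' q' : ℝ,
        (0 ≤ q' ∧ q' ≤ p' ∧
          p' ^ α * ((Finset.univ.filter (fun x => D x = true)).card : ℝ)
            + q' ^ α * ((2 : ℝ) ^ n - ((Finset.univ.filter (fun x => D x = true)).card : ℝ))
            = (2 : ℝ) ^ (-(α - 1) * k) ∧
          p' * ((Finset.univ.filter (fun x => D x = true)).card : ℝ)
            + q' * ((2 : ℝ) ^ n - ((Finset.univ.filter (fun x => D x = true)).card : ℝ)) = 1)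
        → p' = p ∧ q' = q) ∧
      IsGreatest {v : ℝ | ∃ Y : Fin (2 ^ n) → ℝ, (∀ x, 0 ≤ Y x) ∧ (∑ x, Y x = 1) ∧
          (∑ x, Y x ^ α ≤ (2 : ℝ) ^ (-(α - 1) * k)) ∧
          v = ∑ x, Y x * (if D x then (1 : ℝ) else 0)}
        (p * ((Finset.univ.filter (fun x => D x = true)).card : ℝ)) := by
  set S := univ.filter fun x => D x = true
  have hd : (0 : ℝ) < #S := by exact_mod_cast hD0
  have hdN : (#S : ℝ) < 2 ^ n := hDk.trans <| by
    rw [← Real.rpow_natCast]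
    exact Real.rpow_lt_rpow_of_exponent_lt one_lt_two (by linarith)
  have hcN : ((2 : ℝ) ^ n) ^ (1 - α) < 2 ^ (-(α - 1) * k) := by
    rw [← Real.rpow_natCast, ← Real.rpow_mul zero_le_two]
    exact Real.rpow_lt_rpow_of_exponent_lt one_lt_two (by nlinarith)
  have hcd : (2 : ℝ) ^ (-(α - 1) * k) < (#S : ℝ) ^ (1 - α) :=
    calc (2 : ℝ) ^ (-(α - 1) * k) = ((2 : ℝ) ^ k) ^ (1 - α) := by
          rw [← Real.rpow_mul zero_le_two]
          ring_nf
      _ < _ := Real.rpow_lt_rpow_of_neg hd hDk (by linarith)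
  have hval (Y : Fin (2 ^ n) → ℝ) : ∑ x, Y x * (if D x then (1 : ℝ) else 0) = ∑ x ∈ S, Y x := by
    simp [S, sum_filter]
  have hN : (2 : ℝ) ^ n = Fintype.card (Fin (2 ^ n)) := by simp
  simp only [hval]
  rw [hN] at hcN ⊢
  have hstrict {p q : ℝ} (h : IsExtremalPair α #S (Fintype.card (Fin (2 ^ n)))
      (2 ^ (-(α - 1) * k)) p q) :=
    h.pos_lt (by linarith) hd (by positivity) hcN hcd
  obtain ⟨p, q, hpq⟩ := exists_isExtremalPair (by linarith) hd (by positivity) hcN.le hcd.le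
  obtain ⟨hq, hqp⟩ := hstrict hpq
  refine ⟨p, q, hpq, fun p' q' hpq' => ?_, hpq.isGreatest hα hq hqp⟩
  obtain ⟨hq', hqp'⟩ := hstrict hpq'
  obtain rfl : p' = p := mul_right_cancel₀ hd.ne'
    ((IsExtremalPair.isGreatest hpq' hα hq' hqp').unique (hpq.isGreatest hα hq hqp))
  refine ⟨rfl, mul_right_cancel₀ (sub_pos.2 (hN ▸ hdN)).ne' ?_⟩
  linarith [hpq.2.2.2, hpq'.2.2.2]

/-- Characterization of the extremal distribution for Rényi metric entropy of
order `α > 1`: for a boolean `D` on `{0,1}^n` with `0 < |D| < 2^k`, `k < n-1`,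
there is a unique pair `(p,q)` with `p ≥ q ≥ 0` solving the system
`p^α|D| + q^α|D^c| = 2^{-(α-1)k}`, `p|D| + q|D^c| = 1`, and the maximum of
`E[D(Y)]` over distributions `Y` with `H_α(Y) ≥ k` equals `p·|D|`. -/
theorem stmt5 (n : ℕ) (k α : ℝ) (hα : 1 < α) (hk0 : 0 ≤ k) (hk : k < (n : ℝ) - 1)
    (D : Fin (2 ^ n) → Bool)
    (hD0 : 0 < (Finset.univ.filter (fun x => D x = true)).card)
    (hDk : ((Finset.univ.filter (fun x => D x = true)).card : ℝ) < (2 : ℝ) ^ k) :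
    ∃ p q : ℝ,
      (0 ≤ q ∧ q ≤ p ∧
        p ^ α * ((Finset.univ.filter (fun x => D x = true)).card : ℝ)
          + q ^ α * ((2 : ℝ) ^ n - ((Finset.univ.filter (fun x => D x = true)).card : ℝ))
          = (2 : ℝ) ^ (-(α - 1) * k) ∧
        p * ((Finset.univ.filter (fun x => D x = true)).card : ℝ)
          + q * ((2 : ℝ) ^ n - ((Finset.univ.filter (fun x => D x = true)).card : ℝ)) = 1) ∧
      (∀ p' q' : ℝ,
        (0 ≤ q' ∧ q' ≤ p' ∧
          p' ^ α * ((Finset.univ.filter (fun x => D x = true)).card : ℝ)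
            + q' ^ α * ((2 : ℝ) ^ n - ((Finset.univ.filter (fun x => D x = true)).card : ℝ))
            = (2 : ℝ) ^ (-(α - 1) * k) ∧
          p' * ((Finset.univ.filter (fun x => D x = true)).card : ℝ)
            + q' * ((2 : ℝ) ^ n - ((Finset.univ.filter (fun x => D x = true)).card : ℝ)) = 1)
        → p' = p ∧ q' = q) ∧
      IsGreatest {v : ℝ | ∃ Y : Fin (2 ^ n) → ℝ, (∀ x, 0 ≤ Y x) ∧ (∑ x, Y x = 1) ∧
          (∑ x, Y x ^ α ≤ (2 : ℝ) ^ (-(α - 1) * k)) ∧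
          v = ∑ x, Y x * (if D x then (1 : ℝ) else 0)}
        (p * ((Finset.univ.filter (fun x => D x = true)).card : ℝ)) :=
  stmt5_general n k α hα hk D hD0 hDk
end

section
/- For a boolean function D on {0,1}^n with 0 < |D| = d < 2^n and a level k < n, the quantity p_D defined by p_D = 2^{-n} + sqrt((2^n - d)·d^{-1}·(2^{-k-n} - 2^{-2n})) together with q_D = (1 - p_D·d)/(2^n - d) satisfies p_D²·d + q_D²·(2^n - d) = 2^{-k} and p_D·d + q_D·(2^n - d) = 1. -/
/-- The explicit solution of the extremal-distribution system for collision
entropy: with `p = 2^{-n} + sqrt((2^n-d)/d · (2^{-k-n} - 2^{-2n}))` and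
`q = (1 - p·d)/(2^n - d)` one has `p²d + q²(2^n-d) = 2^{-k}` and
`p·d + q·(2^n-d) = 1`. -/
theorem stmt7 (n k d : ℕ) (hk : k < n) (hd0 : 0 < d) (hd : d < 2 ^ n) :
    ∀ p q : ℝ,
      p = (2 : ℝ) ^ (-(n : ℝ)) +
        Real.sqrt (((2 : ℝ) ^ (n : ℝ) - d) / d *
          ((2 : ℝ) ^ (-(k : ℝ) - n) - (2 : ℝ) ^ (-(2 * n : ℝ)))) →
      q = (1 - p * d) / ((2 : ℝ) ^ (n : ℝ) - d) →
      p ^ 2 * d + q ^ 2 * ((2 : ℝ) ^ (n : ℝ) - d) = (2 : ℝ) ^ (-(k : ℝ)) ∧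
      p * d + q * ((2 : ℝ) ^ (n : ℝ) - d) = 1 := by
  intro p q hp hq
  have hN : (0:ℝ) < (2:ℝ) ^ (n:ℝ) := Real.rpow_pos_of_pos two_pos _
  have hdR : (0:ℝ) < (d:ℝ) := by exact_mod_cast hd0
  have hdN : (d:ℝ) < (2:ℝ) ^ (n:ℝ) := by
    rw [Real.rpow_natCast]; exact_mod_cast hd
  have hNd : (0:ℝ) < (2:ℝ) ^ (n:ℝ) - d := by linarith
  have hexp : (-(2 * (n:ℝ))) ≤ -(k:ℝ) - n := by
    have : (k:ℝ) ≤ n := by exact_mod_cast hk.le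
    linarith
  have hnonneg : (0:ℝ) ≤ (2:ℝ) ^ (-(k:ℝ) - n) - (2:ℝ) ^ (-(2 * (n:ℝ))) := by
    have := Real.rpow_le_rpow_of_exponent_le (by norm_num : (1:ℝ) ≤ 2) hexp
    linarith
  have ha : (0:ℝ) ≤ ((2:ℝ) ^ (n:ℝ) - d) / d *
      ((2:ℝ) ^ (-(k:ℝ) - n) - (2:ℝ) ^ (-(2 * (n:ℝ)))) :=
    mul_nonneg (div_nonneg hNd.le hdR.le) hnonneg
  set s := Real.sqrt (((2:ℝ) ^ (n:ℝ) - d) / d *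
      ((2:ℝ) ^ (-(k:ℝ) - n) - (2:ℝ) ^ (-(2 * (n:ℝ))))) with hs
  have hs2 : s ^ 2 = ((2:ℝ) ^ (n:ℝ) - d) / d *
      ((2:ℝ) ^ (-(k:ℝ) - n) - (2:ℝ) ^ (-(2 * (n:ℝ)))) := Real.sq_sqrt ha
  have e1 : (2:ℝ) ^ (-(n:ℝ)) = ((2:ℝ) ^ (n:ℝ))⁻¹ := Real.rpow_neg (by norm_num) _
  have e2 : (2:ℝ) ^ (-(k:ℝ) - n) = (2:ℝ) ^ (-(k:ℝ)) * ((2:ℝ) ^ (n:ℝ))⁻¹ := by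
    rw [sub_eq_add_neg, Real.rpow_add two_pos, e1]
  have e3 : (2:ℝ) ^ (-(2 * (n:ℝ))) = ((2:ℝ) ^ (n:ℝ))⁻¹ * ((2:ℝ) ^ (n:ℝ))⁻¹ := by
    rw [show -(2 * (n:ℝ)) = -(n:ℝ) + -(n:ℝ) by ring, Real.rpow_add two_pos, e1]
  rw [e2, e3] at hs2
  rw [e1] at hp
  have hs2' : s ^ 2 * ((d:ℝ) * (2:ℝ)^(n:ℝ) * (2:ℝ)^(n:ℝ)) =
      ((2:ℝ)^(n:ℝ) - (d:ℝ)) * ((2:ℝ)^(-(k:ℝ)) * (2:ℝ)^(n:ℝ) - 1) := by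
    rw [hs2]; field_simp
  generalize hB : (2:ℝ)^(-(k:ℝ)) = B at *
  generalize hNN : (2:ℝ)^(n:ℝ) = N at *
  constructor
  · subst hp hq
    rw [div_pow, sq (N - (d:ℝ)), ← div_div, div_mul_cancel₀ _ hNd.ne',
      add_div' _ _ _ hNd.ne', div_eq_iff hNd.ne']
    field_simp
    linear_combination N * hs2'
  · subst hq
    rw [div_mul_cancel₀ _ hNd.ne']
    ring
end

section
/- Let X, Z₁, Z₂ be jointly distributed random variables on finite sets, with Z₂ taking values in a set of size 2^{m₂}. If for every boolean function D in a class 𝒟 (closed under fixing coordinates) one has E[D(X,Z₁)] ≤ 2^{-k}·max_{z₁}|D(·,z₁)| + ε (the relaxed metric min-entropy characterization at level k), then for every D ∈ 𝒟 on the extended domain, E[D(X,Z₁,Z₂)] ≤ 2^{-(k-m₂)}·max_{z₁,z₂}|D(·,z₁,z₂)| + 2^{m₂}·ε. -/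
/-! Restricting to the event `Z₂ = z₂` only lowers the mass of each `(x, z₁)`, so each slice
`E[D(X, Z₁, z₂); Z₂ = z₂]` is bounded by the hypothesis applied to the distinguisher `D(·, ·, z₂)`.
Summing over the `2^{m₂}` values of `z₂` multiplies both the `2^{-k}` factor and the error `ε`
by `2^{m₂}`. -/

open Finset

theorem Finset.sup_le_sup_sup_of_mem {ι κ α : Type*} [SemilatticeSup α] [OrderBot α]
    {s : Finset ι} {t : Finset κ} (f : ι → κ → α) {j : κ} (hj : j ∈ t) :
    (s.sup fun i => f i j) ≤ s.sup fun i => t.sup (f i) :=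
  sup_mono_fun fun i _ => le_sup (f := f i) hj

section

variable {α β γ : Type*} [Fintype α] [Fintype β] [Fintype γ]

theorem sum_slice_mul_le_sum_marginal_mul {P : α → β → γ → ℝ} (hP0 : ∀ x z₁ z₂, 0 ≤ P x z₁ z₂)
    {w : α → β → ℝ} (hw : ∀ x z₁, 0 ≤ w x z₁) (z₂ : γ) :
    ∑ x, ∑ z₁, P x z₁ z₂ * w x z₁ ≤ ∑ x, ∑ z₁, (∑ z₂', P x z₁ z₂') * w x z₁ := by
  gcongr with x _ z₁ _
  · exact hw x z₁
  · exact single_le_sum (fun z₂' _ => hP0 x z₁ z₂') (mem_univ z₂)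

theorem sum_sum_sum_comm_last (f : α → β → γ → ℝ) :
    ∑ x, ∑ z₁, ∑ z₂, f x z₁ z₂ = ∑ z₂, ∑ x, ∑ z₁, f x z₁ z₂ := by
  simp only [sum_comm (γ := γ)]

end

theorem two_rpow_natCast_mul_two_rpow_neg (m : ℕ) (k : ℝ) :
    (2 : ℝ) ^ (m : ℝ) * 2 ^ (-k) = 2 ^ (-(k - m)) := by
  rw [← Real.rpow_add two_pos]
  ring_nf

theorem stmt8_general {α β γ : Type*} [Fintype α] [Fintype β] [Fintype γ]
    (m₂ : ℕ) (hγ : Fintype.card γ = 2 ^ m₂) (k ε : ℝ)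
    (P : α → β → γ → ℝ) (hP0 : ∀ x z₁ z₂, 0 ≤ P x z₁ z₂)
    (𝒟 : Set (α → β → γ → Bool))
    (H : ∀ D ∈ 𝒟, ∀ z₂ : γ,
      ∑ x, ∑ z₁, (∑ z₂', P x z₁ z₂') * (if D x z₁ z₂ then (1 : ℝ) else 0)
        ≤ (2 : ℝ) ^ (-k) *
          ((Finset.univ.sup fun z₁ =>
            (Finset.univ.filter (fun x => D x z₁ z₂ = true)).card : ℕ) : ℝ) + ε) :
    ∀ D ∈ 𝒟,
      ∑ x, ∑ z₁, ∑ z₂, P x z₁ z₂ * (if D x z₁ z₂ then (1 : ℝ) else 0)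
        ≤ (2 : ℝ) ^ (-(k - m₂)) *
          ((Finset.univ.sup fun z₁ => Finset.univ.sup fun z₂ =>
            (Finset.univ.filter (fun x => D x z₁ z₂ = true)).card : ℕ) : ℝ)
          + (2 : ℝ) ^ (m₂ : ℝ) * ε := by
  intro D hD
  set C : ℝ := ((Finset.univ.sup fun z₁ => Finset.univ.sup fun z₂ =>
      (Finset.univ.filter (fun x => D x z₁ z₂ = true)).card : ℕ) : ℝ)
  have slice_le (z₂ : γ) :
      ∑ x, ∑ z₁, P x z₁ z₂ * (if D x z₁ z₂ then (1 : ℝ) else 0) ≤ 2 ^ (-k) * C + ε := by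
    calc _ ≤ _ := sum_slice_mul_le_sum_marginal_mul hP0 (fun _ _ => by positivity) z₂
      _ ≤ _ := H D hD z₂
      _ ≤ _ := by
        gcongr
        exact Nat.cast_le.mpr <| sup_le_sup_sup_of_mem (s := univ)
          (fun z₁ z₂ => #{x | D x z₁ z₂ = true}) (mem_univ z₂)
  have hcard : (Fintype.card γ : ℝ) = 2 ^ (m₂ : ℝ) := by
    rw [hγ, Nat.cast_pow, Nat.cast_ofNat, Real.rpow_natCast]
  calc _ = ∑ z₂, ∑ x, ∑ z₁, P x z₁ z₂ * (if D x z₁ z₂ then (1 : ℝ) else 0) :=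
        sum_sum_sum_comm_last _
    _ ≤ Fintype.card γ • (2 ^ (-k) * C + ε) :=
        sum_le_card_nsmul univ _ _ fun z₂ _ => slice_le z₂
    _ = _ := by
        rw [nsmul_eq_mul, hcard, mul_add, ← mul_assoc, two_rpow_natCast_mul_two_rpow_neg]

/-- Leakage chain rule for relaxed metric min-entropy: if for every `D` in a
class `𝒟` (closed under fixing the `z₂` coordinate, expressed by quantifying
over all fixings) one has `E[D(X,Z₁,z₂)] ≤ 2^{-k}·max_{z₁}|D(·,z₁,z₂)| + ε`,
then `E[D(X,Z₁,Z₂)] ≤ 2^{-(k-m₂)}·max_{z₁,z₂}|D(·,z₁,z₂)| + 2^{m₂}·ε`. -/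
theorem stmt8 {α β γ : Type*} [Fintype α] [Fintype β] [Fintype γ]
    (m₂ : ℕ) (hγ : Fintype.card γ = 2 ^ m₂) (k ε : ℝ)
    (P : α → β → γ → ℝ) (hP0 : ∀ x z₁ z₂, 0 ≤ P x z₁ z₂)
    (hP1 : ∑ x, ∑ z₁, ∑ z₂, P x z₁ z₂ = 1)
    (𝒟 : Set (α → β → γ → Bool))
    (H : ∀ D ∈ 𝒟, ∀ z₂ : γ,
      ∑ x, ∑ z₁, (∑ z₂', P x z₁ z₂') * (if D x z₁ z₂ then (1 : ℝ) else 0)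
        ≤ (2 : ℝ) ^ (-k) *
          ((Finset.univ.sup fun z₁ =>
            (Finset.univ.filter (fun x => D x z₁ z₂ = true)).card : ℕ) : ℝ) + ε) :
    ∀ D ∈ 𝒟,
      ∑ x, ∑ z₁, ∑ z₂, P x z₁ z₂ * (if D x z₁ z₂ then (1 : ℝ) else 0)
        ≤ (2 : ℝ) ^ (-(k - m₂)) *
          ((Finset.univ.sup fun z₁ => Finset.univ.sup fun z₂ =>
            (Finset.univ.filter (fun x => D x z₁ z₂ = true)).card : ℕ) : ℝ)
          + (2 : ℝ) ^ (m₂ : ℝ) * ε :=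
  stmt8_general m₂ hγ k ε P hP0 𝒟 H
end

section
/- Let γ(d) = 2^{-n}·d + sqrt((2^n - d)·d·(2^{-k-n} - 2^{-2n})) for real d ∈ [1, 2^k] with k ≤ n - 2. Then γ is increasing on [1, 2^{n-1}] and concave on [1, 2^n]. -/
/-!
With `P = 2^n` and `A = 2^{-k-n} - 2^{-2n}`, which is nonnegative because `k ≤ n`,
`γ(d) = d / P + √((P - d) d A)`. The quadratic `(P - d) d A` is concave and increases up to
`P / 2`, and `√` is concave and increasing on `[0, ∞)`, so the square-root term is concave on
`[0, P]` and nondecreasing below `P / 2`; the strictly increasing linear term does the rest.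
-/

open Set

lemma ConcaveOn.sqrt {E : Type*} [AddCommMonoid E] [Module ℝ E] {s : Set E} {f : E → ℝ}
    (hf : ConcaveOn ℝ s f) (hf₀ : ∀ x ∈ s, 0 ≤ f x) : ConcaveOn ℝ s fun x => √(f x) :=
  ⟨hf.1, fun x hx y hy _ _ ha hb hab =>
    (Real.strictConcaveOn_sqrt.concaveOn.2 (hf₀ x hx) (hf₀ y hy) ha hb hab).trans
      (Real.sqrt_le_sqrt (hf.2 hx hy ha hb hab))⟩

lemma concaveOn_sub_mul_self_mul (P : ℝ) {A : ℝ} (hA : 0 ≤ A) :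
    ConcaveOn ℝ univ fun d : ℝ => (P - d) * d * A := by
  refine (((LinearMap.mul ℝ ℝ (A * P)).concaveOn convex_univ).sub
    ((even_two.convexOn_pow (𝕜 := ℝ)).smul hA)).congr fun d _ => ?_
  simp only [Pi.sub_apply, LinearMap.mul_apply', smul_eq_mul]
  ring

lemma monotoneOn_sub_mul_self (P : ℝ) : MonotoneOn (fun d : ℝ => (P - d) * d) (Iic (P / 2)) := by
  intro x hx y hy hxy
  have hxy' : 0 ≤ (y - x) * (P - x - y) :=
    mul_nonneg (sub_nonneg.2 hxy) (by linarith [mem_Iic.1 hx, mem_Iic.1 hy])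
  linarith

lemma strictMonoOn_mul_add_sqrt_sub_mul_self_mul (P : ℝ) {c A : ℝ} (hc : 0 < c) (hA : 0 ≤ A) :
    StrictMonoOn (fun d : ℝ => c * d + √((P - d) * d * A)) (Iic (P / 2)) :=
  ((strictMono_mul_left_of_pos hc).strictMonoOn _).add_monotone fun _ hx _ hy hxy =>
    Real.sqrt_le_sqrt (mul_le_mul_of_nonneg_right (monotoneOn_sub_mul_self P hx hy hxy) hA)

lemma concaveOn_mul_add_sqrt_sub_mul_self_mul (P c : ℝ) {A : ℝ} (hA : 0 ≤ A) :
    ConcaveOn ℝ (Icc 0 P) fun d : ℝ => c * d + √((P - d) * d * A) :=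
  ((LinearMap.mul ℝ ℝ c).concaveOn (convex_Icc 0 P)).add
    (((concaveOn_sub_mul_self_mul P hA).subset (subset_univ _) (convex_Icc 0 P)).sqrt
      fun _ hd => mul_nonneg (mul_nonneg (sub_nonneg.2 hd.2) hd.1) hA)

theorem stmt10_general (n k : ℕ) (hk : k ≤ n - 2) :
    StrictMonoOn
      (fun d : ℝ => (2 : ℝ) ^ (-(n : ℝ)) * d +
        Real.sqrt (((2 : ℝ) ^ (n : ℝ) - d) * d *
          ((2 : ℝ) ^ (-(k : ℝ) - n) - (2 : ℝ) ^ (-(2 * n : ℝ)))))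
      (Set.Icc 1 ((2 : ℝ) ^ ((n : ℝ) - 1))) ∧
    ConcaveOn ℝ (Set.Icc 1 ((2 : ℝ) ^ (n : ℝ)))
      (fun d : ℝ => (2 : ℝ) ^ (-(n : ℝ)) * d +
        Real.sqrt (((2 : ℝ) ^ (n : ℝ) - d) * d *
          ((2 : ℝ) ^ (-(k : ℝ) - n) - (2 : ℝ) ^ (-(2 * n : ℝ))))) := by
  have hA : 0 ≤ (2 : ℝ) ^ (-(k : ℝ) - n) - (2 : ℝ) ^ (-(2 * n : ℝ)) := by
    have hkn : (k : ℝ) ≤ n := by exact_mod_cast hk.trans (Nat.sub_le n 2)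
    exact sub_nonneg.2 (Real.rpow_le_rpow_of_exponent_le one_le_two (by linarith))
  have hhalf : (2 : ℝ) ^ ((n : ℝ) - 1) = (2 : ℝ) ^ (n : ℝ) / 2 := Real.rpow_sub_one two_ne_zero _
  refine ⟨?_, ?_⟩
  · rw [hhalf]
    exact (strictMonoOn_mul_add_sqrt_sub_mul_self_mul _ (by positivity) hA).mono Icc_subset_Iic_self
  · exact (concaveOn_mul_add_sqrt_sub_mul_self_mul _ _ hA).subset
      (Icc_subset_Icc_left zero_le_one) (convex_Icc _ _)

/-- The function `γ(d) = 2^{-n}d + sqrt((2^n - d)·d·(2^{-k-n} - 2^{-2n}))`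
is strictly increasing on `[1, 2^{n-1}]` and concave on `[1, 2^n]`,
for `k ≤ n - 2`. -/
theorem stmt10 (n k : ℕ) (hn : 2 ≤ n) (hk : k ≤ n - 2) :
    StrictMonoOn
      (fun d : ℝ => (2 : ℝ) ^ (-(n : ℝ)) * d +
        Real.sqrt (((2 : ℝ) ^ (n : ℝ) - d) * d *
          ((2 : ℝ) ^ (-(k : ℝ) - n) - (2 : ℝ) ^ (-(2 * n : ℝ)))))
      (Set.Icc 1 ((2 : ℝ) ^ ((n : ℝ) - 1))) ∧
    ConcaveOn ℝ (Set.Icc 1 ((2 : ℝ) ^ (n : ℝ)))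
      (fun d : ℝ => (2 : ℝ) ^ (-(n : ℝ)) * d +
        Real.sqrt (((2 : ℝ) ^ (n : ℝ) - d) * d *
          ((2 : ℝ) ^ (-(k : ℝ) - n) - (2 : ℝ) ^ (-(2 * n : ℝ))))) :=
  stmt10_general n k hk
end

section
/- Define the distribution X on {0,1}^n (supported on 2^k points, k ≤ n-2) by P_X(x^d) = γ(d) - γ(d-1), where γ(d) = 2^{-n}d + sqrt((2^n-d)·d·(2^{-k-n} - 2^{-2n})) and γ(0) = 0. Then the collision probability satisfies ∑_x P_X(x)² = Θ(2^{-k}·k), hence H₂(X) = k - Ω(log k). -/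
set_option maxHeartbeats 1000000

open Finset

-- √a - √b ≥ (a-b)/(2√a)  for 0 ≤ b ≤ a, 0 < a
lemma sqrt_sub_ge (a b : ℝ) (ha : 0 < a) (hb : 0 ≤ b) (hba : b ≤ a) :
    (a - b) / (2 * Real.sqrt a) ≤ Real.sqrt a - Real.sqrt b := by
  have hsa : 0 < Real.sqrt a := Real.sqrt_pos.2 ha
  have hsb : Real.sqrt b ≤ Real.sqrt a := Real.sqrt_le_sqrt hba
  have h1 : Real.sqrt a ^ 2 = a := Real.sq_sqrt ha.le
  have h2 : Real.sqrt b ^ 2 = b := Real.sq_sqrt hb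
  rw [div_le_iff₀ (by positivity)]
  nlinarith [Real.sqrt_nonneg b]

-- √a - √b ≤ (a-b)/(2√b)  for 0 < b ≤ a
lemma sqrt_sub_le (a b : ℝ) (hb : 0 < b) (hba : b ≤ a) :
    Real.sqrt a - Real.sqrt b ≤ (a - b) / (2 * Real.sqrt b) := by
  have hsb : 0 < Real.sqrt b := Real.sqrt_pos.2 hb
  have hsba : Real.sqrt b ≤ Real.sqrt a := Real.sqrt_le_sqrt hba
  have h1 : Real.sqrt a ^ 2 = a := Real.sq_sqrt (hb.le.trans hba)
  have h2 : Real.sqrt b ^ 2 = b := Real.sq_sqrt hb.le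
  rw [le_div_iff₀ (by positivity)]
  nlinarith

section Delta
variable (A α : ℝ) (d : ℕ)

noncomputable def Dlt (A α : ℝ) (d : ℕ) : ℝ :=
  Real.sqrt ((A - (d:ℝ)) * (d:ℝ) * α) - Real.sqrt ((A - ((d:ℝ) - 1)) * ((d:ℝ) - 1) * α)

lemma delta_nonneg (hα : 0 < α) (hd : 1 ≤ d) (hdA : 4 * (d:ℝ) ≤ A) : 0 ≤ Dlt A α d := by
  have hd1 : (1:ℝ) ≤ (d:ℝ) := by exact_mod_cast hd
  apply sub_nonneg.2
  apply Real.sqrt_le_sqrt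
  nlinarith

lemma delta_sq_lb (hα : 0 < α) (hd : 1 ≤ d) (hdA : 4 * (d:ℝ) ≤ A) :
    α * A / (16 * d) ≤ (Dlt A α d) ^ 2 := by
  have hd1 : (1:ℝ) ≤ (d:ℝ) := by exact_mod_cast hd
  have hA : 0 < A := by nlinarith
  set a := (A - (d:ℝ)) * (d:ℝ) * α with ha_def
  set b := (A - ((d:ℝ) - 1)) * ((d:ℝ) - 1) * α with hb_def
  have ha : 0 < a := by apply mul_pos; nlinarith; exact hα
  have hb : 0 ≤ b := by apply mul_nonneg; nlinarith; exact hα.le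
  have hba : b ≤ a := by nlinarith
  have hkey := sqrt_sub_ge a b ha hb hba
  -- √a ≤ √(α*A*d)
  have hs : Real.sqrt a ≤ Real.sqrt (α * A * d) := Real.sqrt_le_sqrt (by nlinarith)
  set s := Real.sqrt (α * A * d) with hs_def
  have hs0 : 0 < s := Real.sqrt_pos.2 (by positivity)
  have hs2 : s ^ 2 = α * A * d := Real.sq_sqrt (by positivity)
  have hab : α * A / 2 ≤ a - b := by nlinarith
  have hsa0 : 0 < Real.sqrt a := Real.sqrt_pos.2 ha
  have h1 : α * A / (4 * s) ≤ Dlt A α d := by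
    refine le_trans ?_ hkey
    rw [div_le_div_iff₀ (by positivity) (by positivity)]
    nlinarith [Real.sqrt_nonneg a]
  have h0 : 0 ≤ α * A / (4 * s) := by positivity
  have hsq : (α * A / (4 * s)) ^ 2 ≤ (Dlt A α d) ^ 2 := by nlinarith
  refine le_trans ?_ hsq
  rw [div_pow, div_le_div_iff₀ (by positivity) (by positivity)]
  nlinarith [hα.le, hA.le]

lemma delta_sq_ub (hα : 0 < α) (hd : 2 ≤ d) (hdA : 4 * (d:ℝ) ≤ A) :
    (Dlt A α d) ^ 2 ≤ α * A / (3 * ((d:ℝ) - 1)) := by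
  have hd1 : (2:ℝ) ≤ (d:ℝ) := by exact_mod_cast hd
  have hA : 0 < A := by nlinarith
  set a := (A - (d:ℝ)) * (d:ℝ) * α with ha_def
  set b := (A - ((d:ℝ) - 1)) * ((d:ℝ) - 1) * α with hb_def
  have hb : 0 < b := by apply mul_pos; nlinarith; exact hα
  have hba : b ≤ a := by nlinarith
  have hkey := sqrt_sub_le a b hb hba
  -- √b ≥ √((3/4)*α*A*(d-1))
  have hs : Real.sqrt ((3/4) * α * A * ((d:ℝ)-1)) ≤ Real.sqrt b := Real.sqrt_le_sqrt (by nlinarith)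
  set t := Real.sqrt ((3/4) * α * A * ((d:ℝ)-1)) with ht_def
  have ht0 : 0 < t := Real.sqrt_pos.2 (by nlinarith)
  have ht2 : t ^ 2 = (3/4) * α * A * ((d:ℝ)-1) := Real.sq_sqrt (by nlinarith)
  have hsb0 : 0 < Real.sqrt b := Real.sqrt_pos.2 hb
  have hab : a - b ≤ α * A := by nlinarith
  have h1 : Dlt A α d ≤ α * A / (2 * t) := by
    refine le_trans hkey ?_
    rw [div_le_div_iff₀ (by positivity) (by positivity)]
    nlinarith [Real.sqrt_nonneg b]
  have h0 : 0 ≤ Dlt A α d := delta_nonneg A α d hα (by omega) hdA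
  have hsq : (Dlt A α d) ^ 2 ≤ (α * A / (2*t)) ^ 2 := by nlinarith
  refine le_trans hsq ?_
  rw [div_pow, div_le_div_iff₀ (by positivity) (by nlinarith)]
  nlinarith [hα.le, hA.le]

lemma delta_sq_one (hα : 0 < α) (hdA : 4 * (1:ℝ) ≤ A) :
    (Dlt A α 1) ^ 2 ≤ α * A := by
  unfold Dlt
  push_cast
  norm_num
  rw [Real.sq_sqrt (by nlinarith)]
  nlinarith

end Delta

lemma harmonic_cast (m : ℕ) : (harmonic m : ℝ) = ∑ i ∈ Icc 1 m, ((i:ℝ))⁻¹ := by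
  rw [harmonic_eq_sum_Icc]; push_cast; ring

lemma sum_lb (A α e : ℝ) (N : ℕ) (hα : 0 < α) (hN : 2 ≤ N)
    (hNA : 4 * (N:ℝ) ≤ A) (he : 0 ≤ e) :
    α * A / 16 * Real.log (N + 1) ≤ ∑ d ∈ Icc 1 N, (e + Dlt A α d) ^ 2 := by
  have hdA : ∀ d ∈ Icc 1 N, 4 * (d:ℝ) ≤ A := by
    intro d hd
    rw [mem_Icc] at hd
    have : (d:ℝ) ≤ (N:ℝ) := by exact_mod_cast hd.2
    linarith
  have step1 : ∑ d ∈ Icc 1 N, α * A / (16 * d) ≤ ∑ d ∈ Icc 1 N, (e + Dlt A α d) ^ 2 := by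
    apply Finset.sum_le_sum
    intro d hd
    rw [mem_Icc] at hd
    have h1 := delta_sq_lb A α d hα hd.1 (hdA d (by rw [mem_Icc]; exact hd))
    have h2 := delta_nonneg A α d hα hd.1 (hdA d (by rw [mem_Icc]; exact hd))
    nlinarith
  refine le_trans ?_ step1
  have : ∑ d ∈ Icc 1 N, α * A / (16 * d) = α * A / 16 * ∑ d ∈ Icc 1 N, ((d:ℝ))⁻¹ := by
    rw [Finset.mul_sum]
    apply Finset.sum_congr rfl
    intro d hd
    rw [mem_Icc] at hd
    have : (0:ℝ) < d := by exact_mod_cast hd.1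
    field_simp
  rw [this, ← harmonic_cast]
  have hlog : Real.log (N + 1) ≤ (harmonic N : ℝ) := by
    have := log_add_one_le_harmonic N
    push_cast at this ⊢
    exact this
  have hAA : 0 ≤ α * A / 16 := by
    have : 0 < A := by
      have : (0:ℝ) < (N:ℝ) := by positivity
      nlinarith
    positivity
  exact mul_le_mul_of_nonneg_left hlog hAA

lemma sum_ub (A α e : ℝ) (N : ℕ) (hα : 0 < α) (hN : 2 ≤ N)
    (hNA : 4 * (N:ℝ) ≤ A) (he : 0 ≤ e) (hNe : (N:ℝ) * e ^ 2 ≤ α * A) :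
    ∑ d ∈ Icc 1 N, (e + Dlt A α d) ^ 2 ≤ α * A * (7 + Real.log N) := by
  have hNpos : (0:ℝ) < (N:ℝ) := by positivity
  have hA : 0 < A := by nlinarith
  have hdA : ∀ d : ℕ, d ≤ N → 4 * (d:ℝ) ≤ A := by
    intro d hd
    have : (d:ℝ) ≤ (N:ℝ) := by exact_mod_cast hd
    linarith
  have step1 : ∑ d ∈ Icc 1 N, (e + Dlt A α d) ^ 2
      ≤ ∑ d ∈ Icc 1 N, (2 * e ^ 2 + 2 * (Dlt A α d) ^ 2) := by
    apply Finset.sum_le_sum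
    intro d hd
    nlinarith [Dlt A α d, sq_nonneg (e - Dlt A α d)]
  have step2 : ∑ d ∈ Icc 1 N, (2 * e ^ 2 + 2 * (Dlt A α d) ^ 2)
      = 2 * N * e ^ 2 + 2 * ∑ d ∈ Icc 1 N, (Dlt A α d) ^ 2 := by
    rw [Finset.sum_add_distrib, Finset.sum_const, Finset.mul_sum]
    simp [Nat.card_Icc]
    ring
  -- split off d = 1
  have hsplit : Icc 1 N = insert 1 (Icc 2 N) := by
    ext x; simp only [mem_Icc, mem_insert]; omega
  have h1mem : (1:ℕ) ∉ Icc 2 N := by simp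
  have step3 : ∑ d ∈ Icc 1 N, (Dlt A α d) ^ 2
      = (Dlt A α 1) ^ 2 + ∑ d ∈ Icc 2 N, (Dlt A α d) ^ 2 := by
    rw [hsplit, Finset.sum_insert h1mem]
  have step4 : ∑ d ∈ Icc 2 N, (Dlt A α d) ^ 2 ≤ ∑ d ∈ Icc 2 N, α * A / (3 * ((d:ℝ) - 1)) := by
    apply Finset.sum_le_sum
    intro d hd
    rw [mem_Icc] at hd
    exact delta_sq_ub A α d hα hd.1 (hdA d hd.2)
  have step5 : ∑ d ∈ Icc 2 N, α * A / (3 * ((d:ℝ) - 1))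
      = α * A / 3 * ∑ j ∈ Icc 1 (N - 1), ((j:ℝ))⁻¹ := by
    rw [Finset.mul_sum]
    apply Finset.sum_nbij' (fun d => d - 1) (fun j => j + 1)
    · intro a ha; rw [mem_Icc] at ha ⊢; omega
    · intro a ha; rw [mem_Icc] at ha ⊢; omega
    · intro a ha; rw [mem_Icc] at ha; omega
    · intro a ha; rw [mem_Icc] at ha; omega
    · intro a ha
      rw [mem_Icc] at ha
      have h2 : (2:ℝ) ≤ (a:ℝ) := by exact_mod_cast ha.1
      have hc : ((a - 1 : ℕ) : ℝ) = (a:ℝ) - 1 := by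
        rw [Nat.cast_sub (by omega)]; norm_num
      rw [hc]
      field_simp
  have step6 : ∑ j ∈ Icc 1 (N - 1), ((j:ℝ))⁻¹ ≤ 1 + Real.log N := by
    rw [← harmonic_cast]
    have h1 := harmonic_le_one_add_log (N - 1)
    have hN2 : (2:ℝ) ≤ (N:ℝ) := by exact_mod_cast hN
    have h2 : Real.log ((N:ℝ) - 1) ≤ Real.log N := by
      rw [Real.log_le_log_iff (by linarith) (by linarith)]
      linarith
    have h3 : ((N - 1 : ℕ):ℝ) = (N:ℝ) - 1 := by
      rw [Nat.cast_sub (by omega)]; norm_num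
    rw [h3] at h1
    linarith
  have hN2 : (2:ℝ) ≤ (N:ℝ) := by exact_mod_cast hN
  have hone : (Dlt A α 1) ^ 2 ≤ α * A := delta_sq_one A α hα (by linarith)
  have hlogN : 0 ≤ Real.log N := Real.log_nonneg (by linarith)
  have hαA : 0 < α * A := mul_pos hα hA
  calc ∑ d ∈ Icc 1 N, (e + Dlt A α d) ^ 2
      ≤ 2 * N * e ^ 2 + 2 * ∑ d ∈ Icc 1 N, (Dlt A α d) ^ 2 := by rw [← step2]; exact step1
    _ ≤ 2 * (α * A) + 2 * ((Dlt A α 1) ^ 2 + α * A / 3 * (1 + Real.log N)) := by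
        have := le_trans step4 (le_of_eq step5)
        have h6 : α * A / 3 * ∑ j ∈ Icc 1 (N - 1), ((j:ℝ))⁻¹ ≤ α * A / 3 * (1 + Real.log N) :=
          mul_le_mul_of_nonneg_left step6 (by positivity)
        rw [step3]
        nlinarith
    _ ≤ α * A * (7 + Real.log N) := by nlinarith

/-- For the distribution `P_X(x^d) = γ(d) - γ(d-1)` with
`γ(d) = 2^{-n}d + sqrt((2^n-d)·d·(2^{-k-n} - 2^{-2n}))`, the collision
probability is `Θ(2^{-k}·k)`, hence `H₂(X) ≤ k - Ω(log k)`. -/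
theorem stmt11 :
    ∃ c₁ c₂ c₃ : ℝ, ∃ K : ℕ, 0 < c₁ ∧ 0 < c₂ ∧ 0 < c₃ ∧
      ∀ n k : ℕ, K ≤ k → k ≤ n - 2 →
        ∀ γ : ℝ → ℝ,
          (γ = fun d : ℝ => (2 : ℝ) ^ (-(n : ℝ)) * d +
            Real.sqrt (((2 : ℝ) ^ (n : ℝ) - d) * d *
              ((2 : ℝ) ^ (-(k : ℝ) - n) - (2 : ℝ) ^ (-(2 * n : ℝ))))) →
          (c₁ * (2 : ℝ) ^ (-(k : ℝ)) * k
              ≤ ∑ d ∈ Finset.Icc (1 : ℕ) (2 ^ k),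
                  (γ (d : ℝ) - γ ((d : ℝ) - 1)) ^ 2) ∧
          (∑ d ∈ Finset.Icc (1 : ℕ) (2 ^ k), (γ (d : ℝ) - γ ((d : ℝ) - 1)) ^ 2
              ≤ c₂ * (2 : ℝ) ^ (-(k : ℝ)) * k) ∧
          (-Real.logb 2
              (∑ d ∈ Finset.Icc (1 : ℕ) (2 ^ k), (γ (d : ℝ) - γ ((d : ℝ) - 1)) ^ 2)
              ≤ (k : ℝ) - c₃ * Real.logb 2 k) := by
  refine ⟨1/32, 8, 1/2, 1024, by norm_num, by norm_num, by norm_num, ?_⟩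
  intro n k hk hkn γ hγ
  subst hγ
  have hkn2 : k + 2 ≤ n := by omega
  set A : ℝ := (2:ℝ) ^ (n:ℝ) with hA_def
  set α : ℝ := (2:ℝ) ^ (-(k:ℝ) - n) - (2:ℝ) ^ (-(2 * (n:ℝ))) with hα_def
  set e : ℝ := (2:ℝ) ^ (-(n:ℝ)) with he_def
  set P : ℝ := (2:ℝ) ^ (-(k:ℝ)) with hP_def
  set N : ℕ := 2 ^ k with hN_def
  have hkk : (1024:ℝ) ≤ (k:ℝ) := by exact_mod_cast hk
  have hkn2R : (k:ℝ) + 2 ≤ (n:ℝ) := by exact_mod_cast hkn2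
  have hP0 : 0 < P := Real.rpow_pos_of_pos two_pos _
  have hA0 : 0 < A := Real.rpow_pos_of_pos two_pos _
  have he0 : 0 < e := Real.rpow_pos_of_pos two_pos _
  have hα0 : 0 < α := by
    have := Real.rpow_lt_rpow_of_exponent_lt (x := (2:ℝ)) one_lt_two
      (y := -(2 * (n:ℝ))) (z := -(k:ℝ) - n) (by linarith)
    simpa [hα_def, sub_pos] using this
  have hαA : α * A = P - e := by
    rw [hα_def, hA_def, sub_mul, ← Real.rpow_add two_pos, ← Real.rpow_add two_pos,
      hP_def, he_def]
    ring_nf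
  have heP : e ≤ P / 4 := by
    have h1 : (2:ℝ) ^ (-(n:ℝ)) ≤ (2:ℝ) ^ (-(k:ℝ) - 2) :=
      Real.rpow_le_rpow_of_exponent_le one_le_two (by linarith)
    have h2 : (2:ℝ) ^ (-(k:ℝ) - 2) = P * (2:ℝ) ^ (-2:ℝ) := by
      rw [hP_def, ← Real.rpow_add two_pos]; ring_nf
    have h3 : (2:ℝ) ^ (-2:ℝ) = 1/4 := by norm_num
    rw [he_def]
    rw [h2, h3] at h1
    linarith
  have hlowαA : 3/4 * P ≤ α * A := by rw [hαA]; linarith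
  have hupαA : α * A ≤ P := by rw [hαA]; linarith
  have hN2 : 2 ≤ N := by
    rw [hN_def]
    calc 2 = 2^1 := rfl
    _ ≤ 2^k := Nat.pow_le_pow_right (by norm_num) (by omega)
  have hNcast : ((N:ℝ)) = (2:ℝ) ^ (k:ℝ) := by
    rw [hN_def, Real.rpow_natCast]; push_cast; ring
  have hNA : 4 * ((N:ℝ)) ≤ A := by
    rw [hNcast, hA_def]
    have : (4:ℝ) * (2:ℝ) ^ (k:ℝ) = (2:ℝ) ^ ((k:ℝ) + 2) := by
      rw [Real.rpow_add two_pos]; norm_num [mul_comm]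
    rw [this]
    exact Real.rpow_le_rpow_of_exponent_le one_le_two (by linarith)
  have hNe : ((N:ℝ)) * e ^ 2 ≤ α * A := by
    have h1 : ((N:ℝ)) * e ^ 2 = (2:ℝ) ^ ((k:ℝ) + (-(n:ℝ) + -(n:ℝ))) := by
      rw [hNcast, he_def, sq, ← Real.rpow_add two_pos, ← Real.rpow_add two_pos]
    have h2 : (2:ℝ) ^ ((k:ℝ) + (-(n:ℝ) + -(n:ℝ))) ≤ (2:ℝ) ^ (-(k:ℝ) - 4) :=
      Real.rpow_le_rpow_of_exponent_le one_le_two (by linarith)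
    have h3 : (2:ℝ) ^ (-(k:ℝ) - 4) = P * (2:ℝ) ^ (-4:ℝ) := by
      rw [hP_def, ← Real.rpow_add two_pos]; ring_nf
    have h4 : (2:ℝ) ^ (-4:ℝ) = 1/16 := by norm_num
    rw [h1]
    rw [h3, h4] at h2
    linarith
  -- rewrite sum
  have hsum : ∀ d : ℕ,
      ((fun d : ℝ => e * d + Real.sqrt ((A - d) * d * α)) (d : ℝ)
        - (fun d : ℝ => e * d + Real.sqrt ((A - d) * d * α)) ((d:ℝ) - 1)) ^ 2
      = (e + Dlt A α d) ^ 2 := by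
    intro d
    simp only [Dlt]
    ring
  have hSeq : ∑ d ∈ Finset.Icc (1:ℕ) N,
      ((fun d : ℝ => e * d + Real.sqrt ((A - d) * d * α)) (d : ℝ)
        - (fun d : ℝ => e * d + Real.sqrt ((A - d) * d * α)) ((d:ℝ) - 1)) ^ 2
      = ∑ d ∈ Finset.Icc (1:ℕ) N, (e + Dlt A α d) ^ 2 :=
    Finset.sum_congr rfl (fun d _ => hsum d)
  rw [hSeq]
  set S : ℝ := ∑ d ∈ Finset.Icc (1:ℕ) N, (e + Dlt A α d) ^ 2 with hS_def
  have hlogN : Real.log ((N:ℝ)) = (k:ℝ) * Real.log 2 := by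
    rw [hN_def]; push_cast; rw [Real.log_pow]
  have hlogN1 : (k:ℝ) * Real.log 2 ≤ Real.log ((N:ℝ) + 1) := by
    rw [← hlogN]
    apply Real.log_le_log (by positivity)
    linarith
  have hlb := sum_lb A α e N hα0 hN2 hNA he0.le
  have hub := sum_ub A α e N hα0 hN2 hNA he0.le hNe
  have hlog2pos : (0:ℝ) < Real.log 2 := Real.log_pos one_lt_two
  have hkkpos : (0:ℝ) < (k:ℝ) := by linarith
  -- lower bound
  have hlower : 1/32 * P * (k:ℝ) ≤ S := by
    have key : (0:ℝ) ≤ 3/64 * Real.log 2 - 1/32 := by nlinarith [Real.log_two_gt_d9]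
    have s1 : 1/32 * P * (k:ℝ) ≤ 3/64 * P * ((k:ℝ) * Real.log 2) := by
      nlinarith [mul_nonneg (mul_nonneg hP0.le hkkpos.le) key]
    have s2 : 3/64 * P * ((k:ℝ) * Real.log 2) ≤ α * A / 16 * Real.log ((N:ℝ) + 1) := by
      apply mul_le_mul (by linarith) hlogN1 (by positivity) (by positivity)
    linarith
  refine ⟨hlower, ?_, ?_⟩
  -- upper bound
  · have s3 : α * A * (7 + Real.log ((N:ℝ))) ≤ P * (8 * (k:ℝ)) := by
      apply mul_le_mul hupαA ?_ ?_ hP0.le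
      · rw [hlogN]
        nlinarith [Real.log_two_lt_d9]
      · rw [hlogN]
        positivity
    calc S ≤ α * A * (7 + Real.log ((N:ℝ))) := hub
    _ ≤ P * (8 * (k:ℝ)) := s3
    _ = 8 * P * (k:ℝ) := by ring
  -- entropy bound
  · have hSpos : 0 < S := lt_of_lt_of_le (by positivity) hlower
    have hmono : Real.logb 2 (1/32 * P * (k:ℝ)) ≤ Real.logb 2 S :=
      Real.logb_le_logb_of_le one_lt_two (by positivity) hlower
    have hval : Real.logb 2 (1/32 * P * (k:ℝ)) = -5 + -(k:ℝ) + Real.logb 2 (k:ℝ) := by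
      rw [Real.logb_mul (by positivity) (by positivity),
        Real.logb_mul (by positivity) (by positivity)]
      rw [show (1/32:ℝ) = (2:ℝ)^(-5:ℝ) by norm_num,
        Real.logb_rpow two_pos (by norm_num), hP_def,
        Real.logb_rpow two_pos (by norm_num)]
    have hlogbk : (10:ℝ) ≤ Real.logb 2 (k:ℝ) := by
      have := Real.logb_le_logb_of_le one_lt_two (show (0:ℝ) < 1024 by norm_num) hkk
      rw [show (1024:ℝ) = (2:ℝ)^(10:ℝ) by norm_num,
        Real.logb_rpow two_pos (by norm_num)] at this
      exact this
    have := hmono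
    rw [hval] at this
    linarith
end

section
/- Let Y₀ be a distribution on {0,1}^{n+m} jointly distributed with fixed marginal Z such that Y₀|Z=z is flat at level 2^{-k} (each conditional probability is either 2^{-k} or 0). Then a real-valued function D' lies in the normal cone of the set 𝒴 = {P_{Y,Z} : H_∞(Y|Z) ≥ k, Y has marginal Z} at P_{Y₀,Z} if and only if D'(x₁,z) ≥ D'(x₂,z) for every z and every x₁, x₂ with P_{Y₀|Z=z}(x₁) = 2^{-k} and P_{Y₀|Z=z}(x₂) = 0. -/
open Finset

/-!
The constraints defining `𝒴` act on each fibre `p(·, z)` separately, so `𝒴` is a product over `z`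
of capped simplices `{q : 0 ≤ q ≤ c, ∑ q = P_Z(z)}` with `c = 2^{-k} P_Z(z)`, and a linear functional
is maximised on `𝒴` exactly when it is maximised on every fibre. On a fibre where `p₀` is flat:
swapping a full and an empty coordinate of `p₀` stays feasible and changes the objective by
`c (D'(x₂) - D'(x₁))`, which gives necessity; conversely, a threshold `t` separating the values of
`D'` on full coordinates from those on empty ones makes every term of
`∑ (D' - t)(p₀ - p) = ∑ D' p₀ - ∑ D' p` nonnegative.
-/

theorem exists_separating_of_forall_le {ι β : Type*} [Finite ι] [LinearOrder β] [Nonempty β]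
    (f : ι → β) {P Q : ι → Prop} (h : ∀ a b, P a → Q b → f b ≤ f a) :
    ∃ t, (∀ a, P a → t ≤ f a) ∧ ∀ b, Q b → f b ≤ t := by
  by_cases hP : ∃ a, P a
  · obtain ⟨a₀, ha₀, hmin⟩ := Set.exists_min_image {a | P a} f (Set.toFinite _) hP
    exact ⟨f a₀, hmin, fun b hb => h a₀ b ha₀ hb⟩
  · obtain ⟨M, hM⟩ := (Set.finite_range f).bddAbove
    exact ⟨M, fun a ha => (hP ⟨a, ha⟩).elim, fun b _ => hM ⟨b, rfl⟩⟩

theorem Fintype.sum_mul_comp_swap {α R : Type*} [Fintype α] [DecidableEq α] [CommRing R]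
    (f g : α → R) (a b : α) :
    ∑ x, f x * g (Equiv.swap a b x) = ∑ x, f x * g x + (f a - f b) * (g b - g a) := by
  rcases eq_or_ne a b with rfl | hab
  · simp
  rw [← sub_eq_iff_eq_add', ← sum_sub_distrib, Fintype.sum_eq_add a b hab]
  · simp only [Equiv.swap_apply_left, Equiv.swap_apply_right]
    ring
  · rintro x ⟨hxa, hxb⟩
    rw [Equiv.swap_apply_of_ne_of_ne hxa hxb, sub_self]

theorem isMax_sum_sum_mul_iff_forall {α β : Type*} [Fintype α] [Fintype β]
    (F : β → Set (α → ℝ)) {p₀ : α → β → ℝ} (hp₀ : ∀ z, (fun x => p₀ x z) ∈ F z)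
    (D : α → β → ℝ) :
    (∀ p : α → β → ℝ, (∀ z, (fun x => p x z) ∈ F z) →
        ∑ x, ∑ z, D x z * p x z ≤ ∑ x, ∑ z, D x z * p₀ x z) ↔
      ∀ z, ∀ q ∈ F z, ∑ x, D x z * q x ≤ ∑ x, D x z * p₀ x z := by
  classical
  constructor
  · intro hmax z q hq
    let p : α → β → ℝ := fun x w => if w = z then q x else p₀ x w
    have hp : ∀ w, (fun x => p x w) ∈ F w := by
      intro w
      by_cases hw : w = z
      · subst hw
        simpa [p] using hq
      · simpa [p, hw] using hp₀ w
    have hle := hmax p hp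
    rw [sum_comm, sum_comm (f := fun x z => D x z * p₀ x z), ← sub_nonneg, ← sum_sub_distrib,
      sum_eq_single z (fun w _ hw => by simp [p, hw]) (by simp)] at hle
    simpa [p] using hle
  · intro hfib p hp
    rw [sum_comm, sum_comm (f := fun x z => D x z * p₀ x z)]
    exact sum_le_sum fun z _ => hfib z _ (hp z)

section CappedSimplex

variable {α : Type*} [Fintype α]

def cappedSimplex (c s : ℝ) : Set (α → ℝ) :=
  {q | (∀ x, 0 ≤ q x) ∧ ∑ x, q x = s ∧ ∀ x, q x ≤ c}

theorem eq_zero_of_mem_cappedSimplex {c s : ℝ} (hc : c ≤ 0) {q : α → ℝ}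
    (hq : q ∈ cappedSimplex c s) : q = 0 :=
  funext fun x => le_antisymm ((hq.2.2 x).trans hc) (hq.1 x)

theorem comp_perm_mem_cappedSimplex {c s : ℝ} {q : α → ℝ} (hq : q ∈ cappedSimplex c s)
    (σ : Equiv.Perm α) : q ∘ σ ∈ cappedSimplex c s :=
  ⟨fun _ => hq.1 _, (Equiv.sum_comp σ q).trans hq.2.1, fun _ => hq.2.2 _⟩

theorem le_of_isMax_sum_mul_cappedSimplex {c s : ℝ} (hc : 0 < c) {q₀ : α → ℝ}
    (hq₀ : q₀ ∈ cappedSimplex c s) {D : α → ℝ}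
    (hmax : ∀ q ∈ cappedSimplex c s, ∑ x, D x * q x ≤ ∑ x, D x * q₀ x) {x₁ x₂ : α}
    (h₁ : q₀ x₁ = c) (h₂ : q₀ x₂ = 0) : D x₂ ≤ D x₁ := by
  classical
  have hswap := hmax _ (comp_perm_mem_cappedSimplex hq₀ (Equiv.swap x₁ x₂))
  rw [Function.comp_def, Fintype.sum_mul_comp_swap, h₁, h₂] at hswap
  nlinarith

theorem sum_mul_le_of_separating {c s t : ℝ} {q₀ q : α → ℝ} (hq₀ : q₀ ∈ cappedSimplex c s)
    (hq : q ∈ cappedSimplex c s) (hflat : ∀ x, q₀ x = c ∨ q₀ x = 0) {D : α → ℝ}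
    (hfull : ∀ x, q₀ x = c → t ≤ D x) (hempty : ∀ x, q₀ x = 0 → D x ≤ t) :
    ∑ x, D x * q x ≤ ∑ x, D x * q₀ x := by
  have hshift : ∑ x, D x * q₀ x - ∑ x, D x * q x = ∑ x, (D x - t) * (q₀ x - q x) := by
    simp only [sub_mul, mul_sub, sum_sub_distrib, ← mul_sum, hq₀.2.1, hq.2.1]
    ring
  have hterms : 0 ≤ ∑ x, (D x - t) * (q₀ x - q x) := sum_nonneg fun x _ => by
    rcases hflat x with h | h
    · exact mul_nonneg (sub_nonneg.2 (hfull x h)) (by linarith [hq.2.2 x])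
    · exact mul_nonneg_of_nonpos_of_nonpos (sub_nonpos.2 (hempty x h)) (by linarith [hq.1 x])
  linarith

theorem isMax_sum_mul_cappedSimplex_iff {c s : ℝ} (hc : 0 < c) {q₀ : α → ℝ}
    (hq₀ : q₀ ∈ cappedSimplex c s) (hflat : ∀ x, q₀ x = c ∨ q₀ x = 0) (D : α → ℝ) :
    (∀ q ∈ cappedSimplex c s, ∑ x, D x * q x ≤ ∑ x, D x * q₀ x) ↔
      ∀ x₁ x₂, q₀ x₁ = c → q₀ x₂ = 0 → D x₂ ≤ D x₁ := by
  refine ⟨fun hmax x₁ x₂ => le_of_isMax_sum_mul_cappedSimplex hc hq₀ hmax, fun hD q hq => ?_⟩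
  obtain ⟨t, hfull, hempty⟩ := exists_separating_of_forall_le D hD
  exact sum_mul_le_of_separating hq₀ hq hflat hfull hempty

end CappedSimplex

theorem stmt18_general {α β : Type*} [Fintype α] [Fintype β] (k : ℝ)
    (PZ : β → ℝ)
    (𝒴 : Set (α → β → ℝ))
    (h𝒴 : 𝒴 = {p | (∀ x z, 0 ≤ p x z) ∧ (∀ z, ∑ x, p x z = PZ z) ∧
      (∀ x z, p x z ≤ (2 : ℝ) ^ (-k) * PZ z)})
    (p₀ : α → β → ℝ) (hp₀ : p₀ ∈ 𝒴)
    (hflat : ∀ x z, p₀ x z = (2 : ℝ) ^ (-k) * PZ z ∨ p₀ x z = 0)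
    (D' : α → β → ℝ) :
    (∀ p ∈ 𝒴, ∑ x, ∑ z, D' x z * p x z ≤ ∑ x, ∑ z, D' x z * p₀ x z) ↔
    (∀ z, 0 < PZ z → ∀ x₁ x₂,
      p₀ x₁ z = (2 : ℝ) ^ (-k) * PZ z → p₀ x₂ z = 0 → D' x₂ z ≤ D' x₁ z) := by
  have hmem : ∀ p, p ∈ 𝒴 ↔
      ∀ z, (fun x => p x z) ∈ cappedSimplex ((2 : ℝ) ^ (-k) * PZ z) (PZ z) := fun p => by
    simp only [h𝒴, cappedSimplex, Set.mem_ofPred_eq]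
    exact ⟨fun ⟨h0, hs, hc⟩ z => ⟨(h0 · z), hs z, (hc · z)⟩,
      fun h => ⟨fun x z => (h z).1 x, fun z => (h z).2.1, fun x z => (h z).2.2 x⟩⟩
  simp only [hmem] at hp₀ ⊢
  rw [isMax_sum_sum_mul_iff_forall _ hp₀]
  refine forall_congr' fun z => ?_
  rcases le_or_gt (PZ z) 0 with hz | hz
  · have hc : (2 : ℝ) ^ (-k) * PZ z ≤ 0 := mul_nonpos_of_nonneg_of_nonpos (by positivity) hz
    simp only [hz.not_gt, false_imp_iff, iff_true]
    intro q hq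
    simp [congrFun (eq_zero_of_mem_cappedSimplex hc hq),
      congrFun (eq_zero_of_mem_cappedSimplex hc (hp₀ z))]
  · simpa only [hz, true_imp_iff] using
      isMax_sum_mul_cappedSimplex_iff (by positivity) (hp₀ z) (hflat · z) (D' · z)

/-- Characterization of the normal cone of the polytope
`𝒴 = {p ≥ 0 : ∑_x p(x,z) = P_Z(z), p(x,z) ≤ 2^{-k}P_Z(z)}` at a flat point
`p₀`: a function `D'` lies in the normal cone at `p₀` iff
`D'(x₁,z) ≥ D'(x₂,z)` whenever `P_{Y₀|Z=z}(x₁) = 2^{-k}` and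
`P_{Y₀|Z=z}(x₂) = 0`. -/
theorem stmt18 {α β : Type*} [Fintype α] [Fintype β] (k : ℝ)
    (PZ : β → ℝ) (hPZ0 : ∀ z, 0 ≤ PZ z) (hPZ1 : ∑ z, PZ z = 1)
    (𝒴 : Set (α → β → ℝ))
    (h𝒴 : 𝒴 = {p | (∀ x z, 0 ≤ p x z) ∧ (∀ z, ∑ x, p x z = PZ z) ∧
      (∀ x z, p x z ≤ (2 : ℝ) ^ (-k) * PZ z)})
    (p₀ : α → β → ℝ) (hp₀ : p₀ ∈ 𝒴)
    (hflat : ∀ x z, p₀ x z = (2 : ℝ) ^ (-k) * PZ z ∨ p₀ x z = 0)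
    (D' : α → β → ℝ) :
    (∀ p ∈ 𝒴, ∑ x, ∑ z, D' x z * p x z ≤ ∑ x, ∑ z, D' x z * p₀ x z) ↔
    (∀ z, 0 < PZ z → ∀ x₁ x₂,
      p₀ x₁ z = (2 : ℝ) ^ (-k) * PZ z → p₀ x₂ z = 0 → D' x₂ z ≤ D' x₁ z) :=
  stmt18_general k PZ 𝒴 h𝒴 p₀ hp₀ hflat D'
end

section
/- Suppose a real-valued function D in the normal cone of the polytope 𝒴 = {p ≥ 0 : ∑_x p(x,z) = P_Z(z), p(x,z) ≤ 2^{-k}P_Z(z)} at a flat point P_{Y₀,Z} satisfies ⟨D, P_{X,Z}⟩ - ⟨D, P_{Y₀,Z}⟩ ≥ ε with D taking values in [0,1]. Then there exists a threshold t ∈ [0,1] such that the boolean function D'(x,z) = 1[D(x,z) > t] is also in the normal cone and satisfies ⟨D', P_{X,Z}⟩ - ⟨D', P_{Y₀,Z}⟩ ≥ ε. -/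
/-!
Write `g t` for the advantage of the threshold function `1[D > t]`. Since
`D(x,z) = ∫₀¹ 1[t < D(x,z)] dt`, the advantage of `D` is the average of `g` over `[0,1]`,
so some `t ∈ [0,1]` has `g t` at least that average. Thresholding is monotone, so `1[D > t]`
stays in the normal cone.
-/

open Finset MeasureTheory Set

lemma ite_lt_eq_indicator_Iio (t c : ℝ) :
    (if t < c then (1 : ℝ) else 0) = (Iio c).indicator 1 t := by
  simp [indicator_apply]

lemma ite_lt_le_ite_lt {t a b : ℝ} (hab : a ≤ b) :
    (if t < a then (1 : ℝ) else 0) ≤ if t < b then 1 else 0 := by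
  simp_rw [ite_lt_eq_indicator_Iio]
  exact indicator_le_indicator_of_subset (Iio_subset_Iio hab) (fun _ => zero_le_one) t

lemma integrableOn_ite_lt_Icc (c a b : ℝ) :
    IntegrableOn (fun t => if t < c then (1 : ℝ) else 0) (Icc a b) := by
  simp_rw [ite_lt_eq_indicator_Iio]
  exact (integrableOn_const measure_Icc_lt_top.ne).indicator measurableSet_Iio

lemma integral_Icc_zero_one_ite_lt {c : ℝ} (hc : c ∈ Icc (0 : ℝ) 1) :
    ∫ t in Icc (0 : ℝ) 1, (if t < c then (1 : ℝ) else 0) = c := by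
  simp_rw [ite_lt_eq_indicator_Iio]
  have hcut : Iio c ∩ Icc 0 1 = Ico 0 c := by
    ext t
    simp only [Set.mem_inter_iff, Set.mem_Iio, Set.mem_Icc, Set.mem_Ico]
    exact ⟨fun h => ⟨h.2.1, h.1⟩, fun h => ⟨h.2, h.1, h.2.le.trans hc.2⟩⟩
  rw [integral_indicator_one measurableSet_Iio, measureReal_restrict_apply measurableSet_Iio,
    hcut, measureReal_def, Real.volume_Ico, sub_zero, ENNReal.toReal_ofReal hc.1]

theorem exists_threshold_sum_le {ι : Type*} (s : Finset ι) (D w : ι → ℝ)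
    (hD : ∀ i ∈ s, D i ∈ Icc (0 : ℝ) 1) :
    ∃ t ∈ Icc (0 : ℝ) 1, ∑ i ∈ s, D i * w i ≤ ∑ i ∈ s, (if t < D i then (1 : ℝ) else 0) * w i := by
  have hint : IntegrableOn (fun t => ∑ i ∈ s, (if t < D i then (1 : ℝ) else 0) * w i)
      (Icc 0 1) :=
    integrable_finsetSum s fun i _ => (integrableOn_ite_lt_Icc (D i) 0 1).mul_const (w i)
  have hvol : volume (Icc (0 : ℝ) 1) = 1 := by simp
  obtain ⟨t, ht, havg⟩ := exists_setAverage_le (by simp [hvol]) (by simp [hvol]) hint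
  refine ⟨t, ht, le_of_eq_of_le ?_ havg⟩
  rw [setAverage_eq, measureReal_def, hvol, ENNReal.toReal_one, inv_one, one_smul,
    integral_finsetSum s fun i _ => (integrableOn_ite_lt_Icc (D i) 0 1).mul_const (w i)]
  refine sum_congr rfl fun i hi => ?_
  rw [integral_mul_const, integral_Icc_zero_one_ite_lt (hD i hi)]

theorem stmt19_general {α β : Type*} [Fintype α] [Fintype β] (k ε : ℝ)
    (PZ : β → ℝ)
    (p₀ : α → β → ℝ)
    (PXZ : α → β → ℝ)
    (D : α → β → ℝ) (hD01 : ∀ x z, D x z ∈ Set.Icc (0 : ℝ) 1)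
    (hcone : ∀ z, 0 < PZ z → ∀ x₁ x₂,
      p₀ x₁ z = (2 : ℝ) ^ (-k) * PZ z → p₀ x₂ z = 0 → D x₂ z ≤ D x₁ z)
    (hadv : ∑ x, ∑ z, D x z * PXZ x z - ∑ x, ∑ z, D x z * p₀ x z ≥ ε) :
    ∃ t ∈ Set.Icc (0 : ℝ) 1,
      (∀ z, 0 < PZ z → ∀ x₁ x₂,
        p₀ x₁ z = (2 : ℝ) ^ (-k) * PZ z → p₀ x₂ z = 0 →
          (if t < D x₂ z then (1 : ℝ) else 0) ≤ (if t < D x₁ z then (1 : ℝ) else 0)) ∧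
      (∑ x, ∑ z, (if t < D x z then (1 : ℝ) else 0) * PXZ x z
        - ∑ x, ∑ z, (if t < D x z then (1 : ℝ) else 0) * p₀ x z ≥ ε) := by
  obtain ⟨t, ht, hle⟩ := exists_threshold_sum_le univ (fun q : α × β => D q.1 q.2)
    (fun q => PXZ q.1 q.2 - p₀ q.1 q.2) fun q _ => hD01 q.1 q.2
  refine ⟨t, ht, fun z hz x₁ x₂ h₁ h₂ => ite_lt_le_ite_lt (hcone z hz x₁ x₂ h₁ h₂), ?_⟩
  simp only [Fintype.sum_prod_type, mul_sub, sum_sub_distrib] at hle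
  linarith

/-- If a `[0,1]`-valued `D` in the normal cone of
`𝒴 = {p ≥ 0 : ∑_x p(x,z) = P_Z(z), p(x,z) ≤ 2^{-k}P_Z(z)}` at a flat point
`p₀` distinguishes `P_{X,Z}` from `p₀` with advantage at least `ε`, then some
threshold function `D' = 1[D > t]` is also in the normal cone and has
advantage at least `ε`. -/
theorem stmt19 {α β : Type*} [Fintype α] [Fintype β] (k ε : ℝ)
    (PZ : β → ℝ) (hPZ0 : ∀ z, 0 ≤ PZ z) (hPZ1 : ∑ z, PZ z = 1)
    (p₀ : α → β → ℝ)
    (hp₀mem : (∀ x z, 0 ≤ p₀ x z) ∧ (∀ z, ∑ x, p₀ x z = PZ z) ∧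
      (∀ x z, p₀ x z ≤ (2 : ℝ) ^ (-k) * PZ z))
    (hflat : ∀ x z, p₀ x z = (2 : ℝ) ^ (-k) * PZ z ∨ p₀ x z = 0)
    (PXZ : α → β → ℝ) (hPXZ0 : ∀ x z, 0 ≤ PXZ x z)
    (hPXZ1 : ∑ x, ∑ z, PXZ x z = 1)
    (D : α → β → ℝ) (hD01 : ∀ x z, D x z ∈ Set.Icc (0 : ℝ) 1)
    (hcone : ∀ z, 0 < PZ z → ∀ x₁ x₂,
      p₀ x₁ z = (2 : ℝ) ^ (-k) * PZ z → p₀ x₂ z = 0 → D x₂ z ≤ D x₁ z)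
    (hadv : ∑ x, ∑ z, D x z * PXZ x z - ∑ x, ∑ z, D x z * p₀ x z ≥ ε) :
    ∃ t ∈ Set.Icc (0 : ℝ) 1,
      (∀ z, 0 < PZ z → ∀ x₁ x₂,
        p₀ x₁ z = (2 : ℝ) ^ (-k) * PZ z → p₀ x₂ z = 0 →
          (if t < D x₂ z then (1 : ℝ) else 0) ≤ (if t < D x₁ z then (1 : ℝ) else 0)) ∧
      (∑ x, ∑ z, (if t < D x z then (1 : ℝ) else 0) * PXZ x z
        - ∑ x, ∑ z, (if t < D x z then (1 : ℝ) else 0) * p₀ x z ≥ ε) :=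
  stmt19_general k ε PZ p₀ PXZ D hD01 hcone hadv
end
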